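/- Let L be a finite-dimensional Lie algebra over a field F of characteristic p > 0 and let (𝔏, ·^[p], ι) be a p-envelope of L whose center C(𝔏) is contained in ι(L) (this condition characterizes the minimal p-envelopes of L). Then: (1) if L is simple (i.e., L is non-abelian and has no ideals other than 0 and L), then 𝔏 has no p-ideals other than 0 and 𝔏; (2) if L is semisimple (i.e., L has no nonzero abelian ideals), then 𝔏 is semisimple. -/

import Mathlib

open scoped BigOperators TensorProduct DirectSum

noncomputable section

/-- Viewing `v : ℕ → 𝔏` as the coefficient list of a polynomial `Σₖ (v k) tᵏ` with
coefficients in the Lie algebra `𝔏`, this is the coefficient list of its image under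
`ad (t • x + y)`, i.e. of `⁅t • x + y, Σₖ (v k) tᵏ⁆`. -/
def adPolyCoeff {𝔏 : Type*} [LieRing 𝔏] (x y : 𝔏) (v : ℕ → 𝔏) : ℕ → 𝔏 :=
  fun k => ⁅y, v k⁆ + if k = 0 then 0 else ⁅x, v (k - 1)⁆

/-- `pMap` is a `p`-operation on the Lie algebra `𝔏` over `F`, i.e. `(𝔏, pMap)` is a
restricted Lie algebra (Jacobson's axioms):
* `ad (x^[p]) = (ad x) ^ p`;
* `(a • x)^[p] = a ^ p • x^[p]`;
* `(x + y)^[p] = x^[p] + y^[p] + Σ_{i=1}^{p-1} sᵢ(x, y)`, where `i • sᵢ(x, y)` is the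
  coefficient of `t^(i-1)` in `(ad (t • x + y))^(p-1) (x)`. -/
def IsPMap (F : Type*) [Field F] (𝔏 : Type*) [LieRing 𝔏] [LieAlgebra F 𝔏]
    (p : ℕ) (pMap : 𝔏 → 𝔏) : Prop :=
  (∀ x : 𝔏, LieAlgebra.ad F 𝔏 (pMap x) = (LieAlgebra.ad F 𝔏 x) ^ p) ∧
  (∀ (a : F) (x : 𝔏), pMap (a • x) = a ^ p • pMap x) ∧
  (∀ x y : 𝔏, ∃ s : ℕ → 𝔏,
    (∀ i : ℕ, 1 ≤ i → i ≤ p - 1 →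
      i • s i = (adPolyCoeff x y)^[p - 1] (fun k => if k = 0 then x else 0) (i - 1)) ∧
    pMap (x + y) = pMap x + pMap y + ∑ i ∈ Finset.Icc 1 (p - 1), s i)

/-- `(𝔏, pMap, ι)` is a `p`-envelope of the Lie algebra `L`: `(𝔏, pMap)` is a restricted
Lie algebra, `ι : L → 𝔏` is an injective morphism of Lie algebras, and the smallest
`p`-subalgebra of `𝔏` containing `ι(L)` is `𝔏` itself. -/
def IsPEnvelope (F : Type*) [Field F] (p : ℕ)
    (L : Type*) [LieRing L] [LieAlgebra F L]
    (𝔏 : Type*) [LieRing 𝔏] [LieAlgebra F 𝔏]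
    (pMap : 𝔏 → 𝔏) (ι : L →ₗ⁅F⁆ 𝔏) : Prop :=
  IsPMap F 𝔏 p pMap ∧ Function.Injective ι ∧
    ∀ K : LieSubalgebra F 𝔏, (∀ x ∈ K, pMap x ∈ K) → ι.range ≤ K → K = ⊤

/-!
Since `ad (x^[p]) = (ad x)^p`, an `x` whose adjoint action stabilizes a subspace passes this
property on to `x^[p]`. Hence the normalizer of `ι(L)`, and the set of `x` with
`[x, 𝔏] ⊆ ι(L)` once `ι(L)` is known to be an ideal, are `p`-subalgebras containing `ι(L)`,
so both are all of `𝔏`: `ι(L)` is an ideal and `[𝔏, 𝔏] ⊆ ι(L)`. An ideal `J` with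
`J ∩ ι(L) = 0` then satisfies `[𝔏, J] ⊆ J ∩ ι(L) = 0`, so `J ⊆ C(𝔏) ⊆ ι(L)` and `J = 0`.
Both parts follow by applying the simplicity, resp. semisimplicity, of `L` to `ι⁻¹(J)`.
-/

open LieAlgebra

lemma LieIdeal.eq_top_of_toLieSubalgebra_eq_top {R L : Type*} [CommRing R] [LieRing L]
    [LieAlgebra R L] {I : LieIdeal R L} (h : (I : LieSubalgebra R L) = ⊤) : I = ⊤ :=
  eq_top_iff.mpr fun x _ => show x ∈ (I : LieSubalgebra R L) from h ▸ trivial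

lemma LieIdeal.isLieAbelian_comap {R L L' : Type*} [CommRing R] [LieRing L] [LieAlgebra R L]
    [LieRing L'] [LieAlgebra R L'] {f : L →ₗ⁅R⁆ L'} (hf : Function.Injective f)
    {J : LieIdeal R L'} (hJ : IsLieAbelian J) : IsLieAbelian (J.comap f) := by
  rw [LieSubmodule.lie_abelian_iff_lie_self_eq_bot] at hJ
  rw [LieSubmodule.lie_abelian_iff_lie_self_eq_bot, ← le_bot_iff, ← (f.ker_eq_bot).mpr hf,
    ← LieIdeal.map_eq_bot_iff, eq_bot_iff, ← hJ]
  exact (LieIdeal.map_bracket_le f).trans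
    (LieSubmodule.mono_lie LieIdeal.map_comap_le LieIdeal.map_comap_le)

section AdPow

variable {F 𝔏 : Type*} [Field F] [LieRing 𝔏] [LieAlgebra F 𝔏] {p : ℕ} {pMap : 𝔏 → 𝔏}

lemma LieSubalgebra.pMap_mem_normalizer (had : ∀ x, ad F 𝔏 (pMap x) = ad F 𝔏 x ^ p)
    (H : LieSubalgebra F 𝔏) {x : 𝔏} (hx : x ∈ H.normalizer) : pMap x ∈ H.normalizer := by
  rw [LieSubalgebra.mem_normalizer_iff] at hx ⊢
  intro y hy
  rw [← ad_apply (R := F), had]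
  exact Module.End.pow_apply_mem_of_forall_mem (p := H.toSubmodule) p hx y hy

lemma LieIdeal.pMap_mem_normalizer (had : ∀ x, ad F 𝔏 (pMap x) = ad F 𝔏 x ^ p) (hp : 0 < p)
    (I : LieIdeal F 𝔏) {x : 𝔏} (hx : x ∈ I.normalizer) : pMap x ∈ I.normalizer := by
  rw [LieSubmodule.mem_normalizer] at hx ⊢
  intro y
  obtain ⟨n, rfl⟩ := Nat.exists_eq_add_one_of_ne_zero hp.ne'
  rw [← lie_skew, ← ad_apply (R := F), had, pow_succ, Module.End.mul_apply, ad_apply,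
    ← lie_skew]
  refine neg_mem (Module.End.pow_apply_mem_of_forall_mem (p := I.toSubmodule) n ?_ _ ?_)
  · exact fun z hz => lie_mem_right F 𝔏 I x z hz
  · exact neg_mem (hx y)

end AdPow

namespace IsPEnvelope

variable {F : Type*} [Field F] {p : ℕ} {L : Type*} [LieRing L] [LieAlgebra F L]
  {𝔏 : Type*} [LieRing 𝔏] [LieAlgebra F 𝔏] {pMap : 𝔏 → 𝔏} {ι : L →ₗ⁅F⁆ 𝔏}

lemma isIdealMorphism (henv : IsPEnvelope F p L 𝔏 pMap ι) : ι.IsIdealMorphism := by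
  have hN : ι.range.normalizer = ⊤ := henv.2.2 _
    (fun _ => LieSubalgebra.pMap_mem_normalizer henv.1.1 _) (LieSubalgebra.le_normalizer _)
  rw [LieHom.isIdealMorphism_iff]
  intro x y
  have hx : x ∈ ι.range.normalizer := hN ▸ LieSubalgebra.mem_top x
  exact (LieSubalgebra.mem_normalizer_iff _ x).mp hx (ι y) ⟨y, rfl⟩ |>.imp fun _ => Eq.symm

lemma lie_mem_range (henv : IsPEnvelope F p L 𝔏 pMap ι) (hp : 0 < p) (x y : 𝔏) :
    ⁅x, y⁆ ∈ ι.range := by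
  have hI := henv.isIdealMorphism
  have hN : ι.idealRange.normalizer = ⊤ := LieIdeal.eq_top_of_toLieSubalgebra_eq_top <|
    henv.2.2 _ (fun _ => LieIdeal.pMap_mem_normalizer henv.1.1 hp _) fun z hz =>
      ι.idealRange.le_normalizer ((ι.mem_idealRange_iff hI).mpr hz)
  have hy : y ∈ ι.idealRange.normalizer := hN ▸ LieSubmodule.mem_top y
  exact (ι.mem_idealRange_iff hI).mp ((LieSubmodule.mem_normalizer _ _).mp hy x)

lemma eq_bot_of_comap_eq_bot (henv : IsPEnvelope F p L 𝔏 pMap ι) (hp : 0 < p)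
    (hmin : ∀ z ∈ center F 𝔏, z ∈ ι.range) {J : LieIdeal F 𝔏} (hJ : J.comap ι = ⊥) :
    J = ⊥ := by
  have hJι : ∀ z ∈ J, z ∈ ι.range → z = 0 := by
    rintro _ hz ⟨u, rfl⟩
    have hu : u ∈ J.comap ι := hz
    rw [hJ, LieSubmodule.mem_bot] at hu
    rw [hu, map_zero]
  refine eq_bot_iff.mpr fun x hx => hJι x hx (hmin x ?_)
  rw [center, LieModule.mem_maxTrivSubmodule]
  exact fun y => hJι _ (lie_mem_right F 𝔏 J y x hx) (henv.lie_mem_range hp y x)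

lemma eq_top_of_comap_eq_top (henv : IsPEnvelope F p L 𝔏 pMap ι) {J : LieIdeal F 𝔏}
    (hJp : ∀ x ∈ J, pMap x ∈ J) (hJ : J.comap ι = ⊤) : J = ⊤ := by
  refine LieIdeal.eq_top_of_toLieSubalgebra_eq_top (henv.2.2 _ hJp ?_)
  rintro _ ⟨u, rfl⟩
  exact (hJ ▸ LieSubmodule.mem_top u : u ∈ J.comap ι)

end IsPEnvelope

theorem statement2_general (F : Type*) [Field F] (p : ℕ) (hp : 0 < p)
    (L : Type*) [LieRing L] [LieAlgebra F L]
    (𝔏 : Type*) [LieRing 𝔏] [LieAlgebra F 𝔏]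
    (pMap : 𝔏 → 𝔏) (ι : L →ₗ⁅F⁆ 𝔏) (henv : IsPEnvelope F p L 𝔏 pMap ι)
    (hmin : ∀ z ∈ LieAlgebra.center F 𝔏, z ∈ ι.range) :
    ((¬IsLieAbelian L ∧ ∀ I : LieIdeal F L, I = ⊥ ∨ I = ⊤) →
      ∀ J : LieIdeal F 𝔏, (∀ x ∈ J, pMap x ∈ J) → J = ⊥ ∨ J = ⊤) ∧
    ((∀ I : LieIdeal F L, IsLieAbelian I → I = ⊥) →
      ∀ J : LieIdeal F 𝔏, IsLieAbelian J → J = ⊥) := by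
  refine ⟨fun ⟨_, hsimple⟩ J hJp => ?_, fun hss J hJ => ?_⟩
  · exact (hsimple (J.comap ι)).imp (henv.eq_bot_of_comap_eq_bot hp hmin)
      (henv.eq_top_of_comap_eq_top hJp)
  · exact henv.eq_bot_of_comap_eq_bot hp hmin (hss _ (LieIdeal.isLieAbelian_comap henv.2.1 hJ))

/-- Let `L` be a finite-dimensional Lie algebra over a field `F` of
characteristic `p > 0` and let `(𝔏, pMap, ι)` be a `p`-envelope of `L` whose center is
contained in `ι(L)` (this characterizes the minimal `p`-envelopes).  Then: (1) if `L` is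
simple, then `𝔏` has no `p`-ideals other than `⊥` and `⊤`; (2) if `L` is semisimple
(no nonzero abelian ideals), then `𝔏` is semisimple. -/
theorem statement2 (F : Type*) [Field F] (p : ℕ) [CharP F p] (hp : 0 < p)
    (L : Type*) [LieRing L] [LieAlgebra F L] [FiniteDimensional F L]
    (𝔏 : Type*) [LieRing 𝔏] [LieAlgebra F 𝔏]
    (pMap : 𝔏 → 𝔏) (ι : L →ₗ⁅F⁆ 𝔏) (henv : IsPEnvelope F p L 𝔏 pMap ι)
    (hmin : ∀ z ∈ LieAlgebra.center F 𝔏, z ∈ ι.range) :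
    ((¬IsLieAbelian L ∧ ∀ I : LieIdeal F L, I = ⊥ ∨ I = ⊤) →
      ∀ J : LieIdeal F 𝔏, (∀ x ∈ J, pMap x ∈ J) → J = ⊥ ∨ J = ⊤) ∧
    ((∀ I : LieIdeal F L, IsLieAbelian I → I = ⊥) →
      ∀ J : LieIdeal F 𝔏, IsLieAbelian J → J = ⊥) :=
  statement2_general F p hp L 𝔏 pMap ι henv hmin
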